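/- Let Ω ⊂ ℝ² be a bounded radially symmetric domain, let u be a k-invariant classical solution of −Δu = f(|x|,u) in Ω with u = 0 on ∂Ω, and suppose f(|x|,s) is convex in the variable s. Then for every unit vector e, the function w_e(x) = u(σ_e(x)) − u(x) satisfies the differential inequality −Δw_e − f'(|x|,u)w_e ≥ 0 in S_{k,e}^+ and vanishes on ∂S_{k,e}^+. -/

import Mathlib

open Complex MeasureTheory Real Set

noncomputable section

/-- The Laplacian of `u : ℂ → ℝ` (ℂ regarded as the Euclidean plane). -/
def lap (u : ℂ → ℝ) (z : ℂ) : ℝ :=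
  fderiv ℝ (fun w => fderiv ℝ u w 1) z 1 +
    fderiv ℝ (fun w => fderiv ℝ u w Complex.I) z Complex.I

/-- Rotation of the plane by angle `α` about the origin. -/
def rot (α : ℝ) (z : ℂ) : ℂ := Complex.exp ((α : ℂ) * Complex.I) * z

/-- Reflection of the plane across the line `r_ψ` through the origin with direction
`(cos ψ, sin ψ)`. -/
def reflect (ψ : ℝ) (z : ℂ) : ℂ := Complex.exp (((2 * ψ : ℝ) : ℂ) * Complex.I) * (starRingEnd ℂ) z

/-- A function is `k`-invariant on `Ω` if it is invariant under the rotation of angle `2π/k`. -/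
def kInvariant (Ω : Set ℂ) (k : ℕ) (u : ℂ → ℝ) : Prop :=
  ∀ z ∈ Ω, u (rot (2 * Real.pi / k) z) = u z

/-- The open circular sector of `Ω` of polar angles strictly between `a` and `b`. -/
def sector (Ω : Set ℂ) (a b : ℝ) : Set ℂ :=
  {z | z ∈ Ω ∧ ∃ r θ : ℝ, 0 < r ∧ a < θ ∧ θ < b ∧ z = (r : ℂ) * Complex.exp ((θ : ℂ) * Complex.I)}

/-- The sector `S_{2k,e}` of angular width `2π/k` with symmetry axis `r_ψ`. -/
def S2k (Ω : Set ℂ) (k : ℕ) (ψ : ℝ) : Set ℂ := sector Ω (ψ - Real.pi / k) (ψ + Real.pi / k)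

/-- The half-sector `S_{k,e}^+`. -/
def Splus (Ω : Set ℂ) (k : ℕ) (ψ : ℝ) : Set ℂ := sector Ω ψ (ψ + Real.pi / k)

/-- The half-sector `S_{k,e}^-`. -/
def Sminus (Ω : Set ℂ) (k : ℕ) (ψ : ℝ) : Set ℂ := sector Ω (ψ - Real.pi / k) ψ

/-- `w_e(x) = u(σ_e x) - u x`. -/
def wfun (u : ℂ → ℝ) (ψ : ℝ) (z : ℂ) : ℝ := u (reflect ψ z) - u z

/-- Angular derivative of `u` at `z`. -/
def uTheta (u : ℂ → ℝ) (z : ℂ) : ℝ := deriv (fun t : ℝ => u (rot t z)) 0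

/-- `u` is a radial function on `Ω`. -/
def IsRadial (Ω : Set ℂ) (u : ℂ → ℝ) : Prop :=
  ∀ z ∈ Ω, ∀ z' ∈ Ω, ‖z‖ = ‖z'‖ → u z = u z'

/-- `u` is strictly monotone in the angular variable on `D`. -/
def StrictAngularMono (u : ℂ → ℝ) (D : Set ℂ) : Prop :=
  (∀ z ∈ D, 0 < uTheta u z) ∨ (∀ z ∈ D, uTheta u z < 0)

/-- `C¹` functions with compact support contained in `D`. -/
def C10 (D : Set ℂ) : Set (ℂ → ℝ) :=
  {φ | ContDiff ℝ 1 φ ∧ HasCompactSupport φ ∧ tsupport φ ⊆ D}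

/-- The quadratic form `∫_D (|∇v|² - c v²)`. -/
def Qform (c : ℂ → ℝ) (D : Set ℂ) (v : ℂ → ℝ) : ℝ :=
  ∫ z in D, (‖fderiv ℝ v z‖ ^ 2 - c z * v z ^ 2)

/-- First Dirichlet eigenvalue of `-Δ - c` on `D`, as the Rayleigh infimum. -/
def lambda1 (c : ℂ → ℝ) (D : Set ℂ) : ℝ :=
  sInf {μ | ∃ φ ∈ C10 D, (∫ z in D, φ z ^ 2) = 1 ∧ μ = Qform c D φ}

/-- Potential of the linearized operator `L_u = -Δ - f'(|x|, u)`. -/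
def linCoeff (f' : ℝ → ℝ → ℝ) (u : ℂ → ℝ) (z : ℂ) : ℝ := f' (‖z‖) (u z)

/-- The `k`-invariant Morse index of the linearized operator is at most `m`: every subspace
of `k`-invariant functions of `C¹_0(Ω)` on which the quadratic form is negative definite has
dimension at most `m`. -/
def MorseIndexLE (Ω : Set ℂ) (k : ℕ) (c : ℂ → ℝ) (m : ℕ) : Prop :=
  ∀ V : Submodule ℝ (ℂ → ℝ),
    (∀ v ∈ V, v ∈ C10 Ω ∧ ∀ z ∈ Ω, v (rot (2 * Real.pi / k) z) = v z) →
    (∀ v ∈ V, v ≠ 0 → Qform c Ω v < 0) →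
    Module.rank ℝ ↥V ≤ (m : Cardinal)

/-- A bounded radially symmetric planar domain: a ball or an annulus centered at the origin. -/
def BoundedRadialDomain (Ω : Set ℂ) : Prop :=
  (∃ R : ℝ, 0 < R ∧ Ω = Metric.ball (0 : ℂ) R) ∨
    (∃ r R : ℝ, 0 < r ∧ r < R ∧ Ω = {z : ℂ | r < ‖z‖ ∧ ‖z‖ < R})

/-- An unbounded radially symmetric planar domain: the plane or the exterior of a closed ball. -/
def UnboundedRadialDomain (Ω : Set ℂ) : Prop :=
  Ω = Set.univ ∨ ∃ R : ℝ, 0 < R ∧ Ω = {z : ℂ | R < ‖z‖}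

/-- `u` is a classical solution of `-Δu = f(|x|,u)` in `Ω` with `u = 0` on `∂Ω`, where
`f'` is the derivative of `f` with respect to the second variable. -/
structure IsSolution (Ω : Set ℂ) (f f' : ℝ → ℝ → ℝ) (u : ℂ → ℝ) : Prop where
  smooth : ContDiffOn ℝ 2 u Ω
  cont : ContinuousOn u (closure Ω)
  pde : ∀ z ∈ Ω, -lap u z = f (‖z‖) (u z)
  bc : ∀ z ∈ frontier Ω, u z = 0
  hasDeriv : ∀ r s : ℝ, HasDerivAt (fun t => f r t) (f' r s) s
  f_cont : Continuous fun p : ℝ × ℝ => f p.1 p.2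
  f'_cont : Continuous fun p : ℝ × ℝ => f' p.1 p.2

/-! Reflection across a line through the origin is a linear isometry, so it commutes with the
Laplacian, and `w_e` satisfies `-Δw_e = f(|x|, u ∘ σ_e) - f(|x|, u)`; convexity of `f(|x|, ·)`
bounds this from below by `f'(|x|, u) w_e`. On `∂S⁺_{k,e}`, points of `∂Ω` are mapped to `∂Ω`
by `σ_e`, where `u = 0`; points of `r_e` are fixed by `σ_e`; and a point of `r_{ψ+π/k}` is the
rotation by `2π/k` of its mirror image, so `k`-invariance gives `w_e = 0` there. -/

open InnerProductSpace Laplacian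

theorem InnerProductSpace.laplacian_comp_linearIsometryEquiv {E F : Type*}
    [NormedAddCommGroup E] [InnerProductSpace ℝ E] [FiniteDimensional ℝ E]
    [NormedAddCommGroup F] [NormedSpace ℝ F] (f : E → F) (g : E ≃ₗᵢ[ℝ] E) (x : E) :
    Δ (f ∘ g) x = Δ f (g x) := by
  let b := stdOrthonormalBasis ℝ E
  have hcomp : iteratedFDeriv ℝ 2 (f ∘ g) x =
      (iteratedFDeriv ℝ 2 f (g x)).compContinuousLinearMap fun _ => (g : E →L[ℝ] E) := by
    simpa [← iteratedFDerivWithin_univ] using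
      g.toContinuousLinearEquiv.iteratedFDerivWithin_comp_right f uniqueDiffOn_univ
        (mem_univ (g x)) 2
  rw [laplacian_eq_iteratedFDeriv_orthonormalBasis _ b,
    laplacian_eq_iteratedFDeriv_orthonormalBasis _ (b.map g)]
  simp only [hcomp, ContinuousMultilinearMap.compContinuousLinearMap_apply]
  congr! 2 with i
  ext j
  fin_cases j <;> simp [OrthonormalBasis.map_apply]

theorem lap_eq_laplacian {u : ℂ → ℝ} {z : ℂ} (hu : ContDiffAt ℝ 2 u z) : lap u z = Δ u z := by
  have hd : DifferentiableAt ℝ (fderiv ℝ u) z :=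
    (hu.fderiv_right (m := 1) (by norm_num)).differentiableAt one_ne_zero
  simp only [lap, laplacian_eq_iteratedFDeriv_complexPlane, iteratedFDeriv_two_apply]
  rw [fderiv_clm_apply hd (differentiableAt_const _),
    fderiv_clm_apply hd (differentiableAt_const _)]
  simp

def reflectLIE (ψ : ℝ) : ℂ ≃ₗᵢ[ℝ] ℂ := conjLIE.trans (rotation (Circle.exp (2 * ψ)))

theorem coe_reflectLIE (ψ : ℝ) : ⇑(reflectLIE ψ) = reflect ψ := rfl

theorem norm_reflect (ψ : ℝ) (z : ℂ) : ‖reflect ψ z‖ = ‖z‖ := (reflectLIE ψ).norm_map z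

theorem lap_wfun {u : ℂ → ℝ} {ψ : ℝ} {z : ℂ} (hu : ContDiffAt ℝ 2 u z)
    (hσu : ContDiffAt ℝ 2 u (reflect ψ z)) :
    lap (wfun u ψ) z = lap u (reflect ψ z) - lap u z := by
  have hcomp : ContDiffAt ℝ 2 (u ∘ reflectLIE ψ) z :=
    hσu.comp z (reflectLIE ψ).contDiff.contDiffAt
  have hw : wfun u ψ = u ∘ reflectLIE ψ - u := rfl
  rw [hw, lap_eq_laplacian (u := u ∘ reflectLIE ψ - u) (hcomp.sub hu), hcomp.laplacian_sub hu,
    laplacian_comp_linearIsometryEquiv, lap_eq_laplacian hu, lap_eq_laplacian hσu, coe_reflectLIE]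

theorem ConvexOn.add_mul_sub_le_of_hasDerivAt {g : ℝ → ℝ} {s : Set ℝ} (hg : ConvexOn ℝ s g)
    {a b g' : ℝ} (ha : a ∈ s) (hb : b ∈ s) (hd : HasDerivAt g g' a) : g a + g' * (b - a) ≤ g b := by
  rcases lt_trichotomy a b with h | rfl | h
  · have := hg.le_slope_of_hasDerivAt ha hb h hd
    rw [slope_def_field, le_div_iff₀ (sub_pos.2 h)] at this
    linarith
  · simp
  · have := hg.slope_le_of_hasDerivAt hb ha h hd
    rw [slope_def_field, div_le_iff₀ (sub_pos.2 h)] at this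
    linarith

theorem IsSolution.linearized_wfun_nonneg {Ω : Set ℂ} {f f' : ℝ → ℝ → ℝ} {u : ℂ → ℝ}
    (hsol : IsSolution Ω f f' u) (hΩ : IsOpen Ω) (hconv : ∀ r : ℝ, ConvexOn ℝ univ (f r))
    {ψ : ℝ} {z : ℂ} (hz : z ∈ Ω) (hσz : reflect ψ z ∈ Ω) :
    0 ≤ -lap (wfun u ψ) z - linCoeff f' u z * wfun u ψ z := by
  have hu : ∀ y ∈ Ω, ContDiffAt ℝ 2 u y := fun y hy => hsol.smooth.contDiffAt (hΩ.mem_nhds hy)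
  have hpde := hsol.pde z hz
  have hσpde := hsol.pde _ hσz
  rw [norm_reflect] at hσpde
  have htangent := (hconv ‖z‖).add_mul_sub_le_of_hasDerivAt (mem_univ (u z))
    (mem_univ (u (reflect ψ z))) (hsol.hasDeriv ‖z‖ (u z))
  rw [lap_wfun (hu z hz) (hu _ hσz)]
  simp only [wfun, linCoeff]
  linarith

theorem rot_ofReal_mul_exp (α r θ : ℝ) :
    rot α (r * Complex.exp (θ * I)) = r * Complex.exp ((α + θ : ℝ) * I) := by
  rw [rot, mul_left_comm, ← Complex.exp_add]
  push_cast
  ring_nf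

theorem reflect_ofReal_mul_exp (ψ r θ : ℝ) :
    reflect ψ (r * Complex.exp (θ * I)) = r * Complex.exp ((2 * ψ - θ : ℝ) * I) := by
  rw [reflect, map_mul, conj_ofReal, ← Complex.exp_conj, mul_left_comm, ← Complex.exp_add]
  congr 2
  simp [Complex.conj_ofReal]
  ring

theorem norm_ofReal_mul_exp {r : ℝ} (hr : 0 ≤ r) (θ : ℝ) :
    ‖(r : ℂ) * Complex.exp (θ * I)‖ = r := by
  rw [norm_mul, Complex.norm_exp_ofReal_mul_I, mul_one, Complex.norm_of_nonneg hr]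

theorem re_rot_neg_ofReal_mul_exp (μ r θ : ℝ) :
    (rot (-μ) (r * Complex.exp (θ * I))).re = r * Real.cos (θ - μ) := by
  rw [rot_ofReal_mul_exp, re_ofReal_mul, Complex.exp_ofReal_mul_I_re, neg_add_eq_sub]

theorem eq_norm_mul_exp_arg_rot_neg (μ : ℝ) (z : ℂ) :
    z = ‖z‖ * Complex.exp ((μ + arg (rot (-μ) z) : ℝ) * I) := by
  have hnorm : ‖rot (-μ) z‖ = ‖z‖ := by
    rw [rot, norm_mul, Complex.norm_exp_ofReal_mul_I, one_mul]
  have hrot : rot μ (rot (-μ) z) = z := by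
    rw [rot, rot, ← mul_assoc, ← Complex.exp_add]
    simp
  rw [← rot_ofReal_mul_exp, ← hnorm, norm_mul_exp_arg_mul_I, hrot]

theorem re_rot_neg_eq_norm_mul_cos_arg (μ : ℝ) (z : ℂ) :
    (rot (-μ) z).re = ‖z‖ * Real.cos (arg (rot (-μ) z)) := by
  nth_rewrite 1 [eq_norm_mul_exp_arg_rot_neg μ z]
  rw [re_rot_neg_ofReal_mul_exp, add_sub_cancel_left]

theorem Real.cos_lt_cos_iff_abs_lt {φ δ : ℝ} (hφ : |φ| ≤ π) (hδ : δ ∈ Icc 0 π) :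
    Real.cos δ < Real.cos φ ↔ |φ| < δ := by
  rw [← Real.cos_abs φ]
  exact Real.strictAntiOn_cos.lt_iff_gt hδ ⟨abs_nonneg φ, hφ⟩

theorem Real.cos_le_cos_iff_abs_le {φ δ : ℝ} (hφ : |φ| ≤ π) (hδ : δ ∈ Icc 0 π) :
    Real.cos δ ≤ Real.cos φ ↔ |φ| ≤ δ := by
  rw [← Real.cos_abs φ]
  exact Real.strictAntiOn_cos.le_iff_ge hδ ⟨abs_nonneg φ, hφ⟩

/-- With mid-angle `μ = (a + b) / 2` and half-width `δ = (b - a) / 2`, the sector is a cone cut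
out by a strict inequality between continuous functions, so it is open and its closure satisfies
the non-strict one. -/
theorem sector_eq_inter {Ω : Set ℂ} {a b : ℝ} (hab : a ≤ b) (hba : b - a ≤ 2 * π) :
    sector Ω a b = Ω ∩ {z | z ≠ 0 ∧
      Real.cos ((b - a) / 2) * ‖z‖ < (rot (-((a + b) / 2)) z).re} := by
  have hδ : (b - a) / 2 ∈ Icc 0 π := ⟨by linarith, by linarith⟩
  ext z
  constructor
  · rintro ⟨hzΩ, r, θ, hr, haθ, hθb, rfl⟩
    refine ⟨hzΩ, mul_ne_zero (ofReal_ne_zero.2 hr.ne') (Complex.exp_ne_zero _), ?_⟩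
    rw [norm_ofReal_mul_exp hr.le, re_rot_neg_ofReal_mul_exp, mul_comm]
    refine mul_lt_mul_of_pos_left ((Real.cos_lt_cos_iff_abs_lt ?_ hδ).2 ?_) hr
    · exact abs_le.2 ⟨by linarith, by linarith⟩
    · exact abs_lt.2 ⟨by linarith, by linarith⟩
  · rintro ⟨hzΩ, hz0, hlt⟩
    rw [re_rot_neg_eq_norm_mul_cos_arg, mul_comm, mul_lt_mul_iff_of_pos_left (norm_pos_iff.2 hz0),
      Real.cos_lt_cos_iff_abs_lt (abs_arg_le_pi _) hδ] at hlt
    obtain ⟨h1, h2⟩ := abs_lt.1 hlt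
    exact ⟨hzΩ, ‖z‖, _, norm_pos_iff.2 hz0, by linarith, by linarith,
      eq_norm_mul_exp_arg_rot_neg ((a + b) / 2) z⟩

theorem mem_frontier_sector {Ω : Set ℂ} {a b : ℝ} (hΩ : IsOpen Ω) (hab : a ≤ b)
    (hba : b - a ≤ 2 * π) {z : ℂ} (hz : z ∈ frontier (sector Ω a b)) :
    z ∈ frontier Ω ∨
      z ∈ Ω ∧ ∃ r : ℝ, z = r * Complex.exp (a * I) ∨ z = r * Complex.exp (b * I) := by
  set μ := (a + b) / 2
  set δ := (b - a) / 2
  have hδ : δ ∈ Icc 0 π := ⟨by simp only [δ]; linarith, by simp only [δ]; linarith⟩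
  have hcont : Continuous fun w : ℂ => (rot (-μ) w).re :=
    Complex.continuous_re.comp (continuous_const.mul continuous_id)
  have hS := sector_eq_inter (Ω := Ω) hab hba
  have hSopen : IsOpen (sector Ω a b) := hS ▸ hΩ.inter
    (isOpen_compl_singleton.inter (isOpen_lt (continuous_const.mul continuous_norm) hcont))
  rw [hSopen.frontier_eq] at hz
  obtain ⟨hzcl, hzS⟩ := hz
  have hzcl' : z ∈ closure Ω ∩ {w | Real.cos δ * ‖w‖ ≤ (rot (-μ) w).re} := by
    refine closure_minimal ?_
      (isClosed_closure.inter (isClosed_le (continuous_const.mul continuous_norm) hcont)) hzcl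
    rw [hS]
    exact inter_subset_inter subset_closure fun w hw => hw.2.le
  by_cases hzΩ : z ∈ Ω
  swap
  · exact Or.inl ⟨hzcl'.1, by rwa [hΩ.interior_eq]⟩
  refine Or.inr ⟨hzΩ, ?_⟩
  by_cases hz0 : z = 0
  · exact ⟨0, Or.inl (by simp [hz0])⟩
  set φ := arg (rot (-μ) z)
  have hnorm : 0 < ‖z‖ := norm_pos_iff.2 hz0
  have hle : Real.cos δ * ‖z‖ ≤ (rot (-μ) z).re := hzcl'.2
  have hnlt : ¬ Real.cos δ * ‖z‖ < (rot (-μ) z).re := fun h => hzS (hS ▸ ⟨hzΩ, hz0, h⟩)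
  rw [re_rot_neg_eq_norm_mul_cos_arg, mul_comm, mul_le_mul_iff_of_pos_left hnorm,
    Real.cos_le_cos_iff_abs_le (abs_arg_le_pi _) hδ] at hle
  rw [re_rot_neg_eq_norm_mul_cos_arg, mul_comm, mul_lt_mul_iff_of_pos_left hnorm,
    Real.cos_lt_cos_iff_abs_lt (abs_arg_le_pi _) hδ] at hnlt
  have hz := eq_norm_mul_exp_arg_rot_neg μ z
  rcases (abs_eq hδ.1).1 (le_antisymm hle (not_lt.1 hnlt)) with h | h
  · refine ⟨‖z‖, Or.inr ?_⟩
    rwa [show μ + φ = b by simp only [μ, δ] at h ⊢; linarith] at hz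
  · refine ⟨‖z‖, Or.inl ?_⟩
    rwa [show μ + φ = a by simp only [μ, δ] at h ⊢; linarith] at hz

theorem BoundedRadialDomain.isOpen {Ω : Set ℂ} (hΩ : BoundedRadialDomain Ω) : IsOpen Ω := by
  rcases hΩ with ⟨R, -, rfl⟩ | ⟨r, R, -, -, rfl⟩
  · exact Metric.isOpen_ball
  · exact (isOpen_lt continuous_const continuous_norm).inter
      (isOpen_lt continuous_norm continuous_const)

theorem BoundedRadialDomain.mem_of_norm_eq {Ω : Set ℂ} (hΩ : BoundedRadialDomain Ω) {z w : ℂ}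
    (h : ‖w‖ = ‖z‖) (hz : z ∈ Ω) : w ∈ Ω := by
  rcases hΩ with ⟨R, -, rfl⟩ | ⟨r, R, -, -, rfl⟩
  · simpa [h] using hz
  · simpa [h] using hz

theorem BoundedRadialDomain.preimage_reflect {Ω : Set ℂ} (hΩ : BoundedRadialDomain Ω) (ψ : ℝ) :
    reflect ψ ⁻¹' Ω = Ω :=
  Set.ext fun z =>
    ⟨hΩ.mem_of_norm_eq (norm_reflect ψ z).symm, hΩ.mem_of_norm_eq (norm_reflect ψ z)⟩

theorem BoundedRadialDomain.reflect_mem_frontier {Ω : Set ℂ} (hΩ : BoundedRadialDomain Ω)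
    {ψ : ℝ} {z : ℂ} (hz : z ∈ frontier Ω) : reflect ψ z ∈ frontier Ω := by
  have h : reflect ψ ⁻¹' frontier Ω = frontier (reflect ψ ⁻¹' Ω) :=
    (reflectLIE ψ).toHomeomorph.preimage_frontier Ω
  change z ∈ reflect ψ ⁻¹' frontier Ω
  rwa [h, hΩ.preimage_reflect]

theorem Real.pi_div_natCast_le_pi (k : ℕ) : π / k ≤ π := by
  rcases k.eq_zero_or_pos with rfl | hk
  · simp [pi_pos.le]
  · exact div_le_self pi_pos.le (by exact_mod_cast hk)

theorem wfun_eq_zero_of_mem_frontier_Splus {Ω : Set ℂ} {f f' : ℝ → ℝ → ℝ} {u : ℂ → ℝ} {k : ℕ}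
    (hΩ : BoundedRadialDomain Ω) (hsol : IsSolution Ω f f' u) (hinv : kInvariant Ω k u)
    {ψ : ℝ} {z : ℂ} (hz : z ∈ frontier (Splus Ω k ψ)) : wfun u ψ z = 0 := by
  have hπk : 0 ≤ π / k := by positivity
  have hπk' := Real.pi_div_natCast_le_pi k
  rcases mem_frontier_sector hΩ.isOpen (b := ψ + π / k) (by linarith) (by linarith [pi_pos]) hz
    with hzΩ | ⟨hzΩ, r, rfl | rfl⟩
  · rw [wfun, hsol.bc _ (hΩ.reflect_mem_frontier hzΩ), hsol.bc _ hzΩ, sub_self]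
  · rw [wfun, reflect_ofReal_mul_exp, show 2 * ψ - ψ = ψ by ring, sub_self]
  · have hσ := hΩ.mem_of_norm_eq (norm_reflect ψ _) hzΩ
    have hrot : rot (2 * π / k) (reflect ψ (r * Complex.exp ((ψ + π / k : ℝ) * I))) =
        r * Complex.exp ((ψ + π / k : ℝ) * I) := by
      rw [reflect_ofReal_mul_exp, rot_ofReal_mul_exp]
      ring_nf
    rw [wfun, ← hinv _ hσ, hrot, sub_self]

theorem statement14_general
    (Ω : Set ℂ) (f f' : ℝ → ℝ → ℝ) (u : ℂ → ℝ) (k : ℕ)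
    (hΩ : BoundedRadialDomain Ω)
    (hsol : IsSolution Ω f f' u)
    (hinv : kInvariant Ω k u)
    (hconv : ∀ r : ℝ, ConvexOn ℝ Set.univ (f r)) :
    ∀ ψ : ℝ,
      (∀ z ∈ Splus Ω k ψ, 0 ≤ -lap (wfun u ψ) z - linCoeff f' u z * wfun u ψ z) ∧
      (∀ z ∈ frontier (Splus Ω k ψ), wfun u ψ z = 0) :=
  fun ψ =>
    ⟨fun z hz => hsol.linearized_wfun_nonneg hΩ.isOpen hconv hz.1
      (hΩ.mem_of_norm_eq (norm_reflect ψ z) hz.1),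
    fun _ hz => wfun_eq_zero_of_mem_frontier_Splus hΩ hsol hinv hz⟩

/-- For `f` convex in the second variable, `w_e` satisfies the differential inequality
`-Δw_e - f'(|x|,u) w_e ≥ 0` in `S_{k,e}^+` and vanishes on `∂S_{k,e}^+`, for every
direction `e`. -/
theorem statement14
    (Ω : Set ℂ) (f f' : ℝ → ℝ → ℝ) (u : ℂ → ℝ) (k : ℕ)
    (hk : 1 ≤ k) (hΩ : BoundedRadialDomain Ω)
    (hsol : IsSolution Ω f f' u)
    (hinv : kInvariant Ω k u)
    (hconv : ∀ r : ℝ, ConvexOn ℝ Set.univ (f r)) :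
    ∀ ψ : ℝ,
      (∀ z ∈ Splus Ω k ψ, 0 ≤ -lap (wfun u ψ) z - linCoeff f' u z * wfun u ψ z) ∧
      (∀ z ∈ frontier (Splus Ω k ψ), wfun u ψ z = 0) :=
  statement14_general Ω f f' u k hΩ hsol hinv hconv
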